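/- arXiv:math/0606727 — 3 statements merged into one kernel-verified Lean document; each statement's English description precedes it below -/
import Mathlib

section
/- Let D ⊂ ℂ^N be a bounded domain and let Φ : bD → ℂ^N \ {0} be a continuous map which extends holomorphically through D. Then the Brouwer degree of Φ is nonnegative. -/
open Set Metric Bornology MvPolynomial

noncomputable section

/-- An axiomatization of the Brouwer degree `deg f D y` of a continuous map
`f` on the closure of a bounded open set `D` with respect to a value `y ∉ f (frontier D)`,
via the classical normalization, additivity and homotopy-invariance axioms,
which determine the degree uniquely. -/
structure BrouwerDegreeTheory (E : Type*) [NormedAddCommGroup E] [NormedSpace ℝ E]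
    [FiniteDimensional ℝ E] where
  deg : (E → E) → Set E → E → ℤ
  normalization : ∀ (D : Set E) (y : E), IsOpen D → IsBounded D → y ∈ D → deg id D y = 1
  additivity : ∀ (f : E → E) (D D₁ D₂ : Set E) (y : E), IsOpen D → IsBounded D →
    ContinuousOn f (closure D) → IsOpen D₁ → IsOpen D₂ → D₁ ⊆ D → D₂ ⊆ D →
    Disjoint D₁ D₂ → y ∉ f '' (closure D \ (D₁ ∪ D₂)) →
    deg f D y = deg f D₁ y + deg f D₂ y
  homotopy_invariance : ∀ (H : ℝ → E → E) (D : Set E) (y : ℝ → E), IsOpen D → IsBounded D →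
    ContinuousOn (fun p : ℝ × E => H p.1 p.2) (Icc (0:ℝ) 1 ×ˢ closure D) →
    ContinuousOn y (Icc (0:ℝ) 1) →
    (∀ t ∈ Icc (0:ℝ) 1, ∀ x ∈ frontier D, H t x ≠ y t) →
    deg (H 0) D (y 0) = deg (H 1) D (y 1)

/-- A continuous map on the boundary of `D` extends holomorphically through `D`:
there is a map continuous on the closure of `D`, holomorphic on `D`, agreeing with `Φ`
on the boundary of `D`. -/
def ExtendsHolomorphically {E F : Type*} [NormedAddCommGroup E] [NormedSpace ℂ E]
    [NormedAddCommGroup F] [NormedSpace ℂ F] (Φ : E → F) (D : Set E) : Prop :=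
  ∃ g : E → F, ContinuousOn g (closure D) ∧ DifferentiableOn ℂ g D ∧
    ∀ z ∈ frontier D, g z = Φ z

/-- `D` has `C^k` boundary: near each boundary point there is a `C^k` defining function
with nonvanishing differential. -/
def HasCkBoundary {E : Type*} [NormedAddCommGroup E] [NormedSpace ℝ E]
    (k : ℕ∞) (D : Set E) : Prop :=
  ∀ p ∈ frontier D, ∃ (U : Set E) (ρ : E → ℝ), IsOpen U ∧ p ∈ U ∧
    ContDiffOn ℝ k ρ U ∧ (∀ x ∈ U, fderiv ℝ ρ x ≠ 0) ∧
    D ∩ U = {x ∈ U | ρ x < 0} ∧ frontier D ∩ U = {x ∈ U | ρ x = 0}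

/-- An open set `Ω ⊆ ℂ^N` is Stein iff it is holomorphically convex. -/
def IsStein {E : Type*} [NormedAddCommGroup E] [NormedSpace ℂ E] (Ω : Set E) : Prop :=
  IsOpen Ω ∧ ∀ K ⊆ Ω, IsCompact K →
    IsCompact {z ∈ Ω | ∀ f : E → ℂ, DifferentiableOn ℂ f Ω → ‖f z‖ ≤ ⨆ w : K, ‖f (w : E)‖}

/-- A compact set has a Stein neighbourhood basis if every neighbourhood of it contains
a Stein open neighbourhood of it. -/
def HasSteinNeighbourhoodBasis {E : Type*} [NormedAddCommGroup E] [NormedSpace ℂ E]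
    (K : Set E) : Prop :=
  ∀ U : Set E, IsOpen U → K ⊆ U → ∃ Ω : Set E, IsStein Ω ∧ K ⊆ Ω ∧ Ω ⊆ U

open Filter Topology MeasureTheory

/-!
Replace the boundary data by its holomorphic extension `g` and move the target `0` to a nearby
regular value `c` (Sard). The fibre `g⁻¹(c)` is then finite, and by additivity the degree is the
sum of the local degrees at its points. Near each of them `g` is a small perturbation of an
invertible `ℂ`-linear map, whose degree is `1` because `GL(n, ℂ)` is path connected. So the degree
counts the points of the fibre.
-/

theorem LinearMap.exists_polynomial_eval_eq_det_add_smul {K M : Type*} [Field K] [AddCommGroup M]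
    [Module K M] [FiniteDimensional K M] (f g : M →ₗ[K] M) :
    ∃ q : Polynomial K, ∀ s : K, q.eval s = LinearMap.det (f + s • g) := by
  classical
  let b := Module.finBasis K M
  refine ⟨((toMatrix b b f).map Polynomial.C + (Polynomial.X : Polynomial K) •
    (toMatrix b b g).map Polynomial.C).det, fun s => ?_⟩
  rw [← LinearMap.det_toMatrix b, ← Polynomial.coe_evalRingHom, RingHom.map_det]
  congr 1
  ext i j
  simp [mul_comm s]

theorem LinearMap.exists_path_forall_det_ne_zero {M : Type*} [AddCommGroup M] [Module ℂ M]
    [FiniteDimensional ℂ M] {f : M →ₗ[ℂ] M} (hf : LinearMap.det f ≠ 0) :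
    ∃ γ : Path (0 : ℂ) 1, ∀ t, LinearMap.det (f + γ t • (LinearMap.id - f)) ≠ 0 := by
  -- `s ↦ det (f + s • (id - f))` is a polynomial, nonzero at `0` and `1`; the complement of its
  -- finitely many roots is path connected.
  obtain ⟨q, hq⟩ := f.exists_polynomial_eval_eq_det_add_smul (LinearMap.id - f)
  have hq0 : q.eval 0 ≠ 0 := by simpa [hq] using hf
  have hq1 : q.eval 1 ≠ 0 := by simp [hq]
  have hroots : {s : ℂ | q.IsRoot s}.Countable :=
    (Polynomial.finite_setOfPred_isRoot (by rintro rfl; simp at hq1)).countable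
  obtain ⟨γ, hγ⟩ := (hroots.isPathConnected_compl_of_one_lt_rank
    (by simp [Complex.rank_real_complex])).joinedIn 0 hq0 1 hq1
  exact ⟨γ, fun t => by simpa [← hq] using hγ t⟩

theorem HasFDerivAt.eventually_norm_sub_lt {𝕜 E F : Type*} [NontriviallyNormedField 𝕜]
    [NormedAddCommGroup E] [NormedSpace 𝕜 E] [NormedAddCommGroup F] [NormedSpace 𝕜 F]
    {g : E → F} {p : E} {A : E ≃L[𝕜] F} (hg : HasFDerivAt g (A : E →L[𝕜] F) p) :
    ∀ᶠ z in 𝓝[≠] p, ‖g z - g p - A (z - p)‖ < ‖A (z - p)‖ := by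
  set K := ‖(A.symm : F →L[𝕜] E)‖
  have hK : ∀ w, ‖w‖ ≤ K * ‖A w‖ := fun w => by
    simpa using (A.symm : F →L[𝕜] E).le_opNorm (A w)
  have hsmall := hg.isLittleO.def (inv_pos.2 (by positivity : 0 < K + 1))
  filter_upwards [nhdsWithin_le_nhds hsmall, self_mem_nhdsWithin] with z hz hzp
  calc ‖g z - g p - A (z - p)‖ ≤ (K + 1)⁻¹ * ‖z - p‖ := hz
    _ ≤ (K + 1)⁻¹ * (K * ‖A (z - p)‖) := by gcongr; exact hK _
    _ < ‖A (z - p)‖ := by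
      have : 0 < ‖A (z - p)‖ := norm_pos_iff.2 (A.map_ne_zero_iff.2 (sub_ne_zero.2 hzp))
      rw [← mul_assoc]
      refine mul_lt_of_lt_one_left this ?_
      rw [inv_mul_lt_iff₀ (by positivity)]; linarith

theorem Set.Finite.exists_pos_forall_pairwiseDisjoint_ball {X : Type*} [MetricSpace X]
    {S : Set X} (hS : S.Finite) {P : X → ℝ → Prop} (hP : ∀ p ∈ S, ∀ᶠ r in 𝓝[>] 0, P p r) :
    ∃ r > 0, (∀ p ∈ S, P p r) ∧ S.PairwiseDisjoint (ball · r) := by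
  have hsep : ∀ p ∈ S, ∀ q ∈ S, ∀ᶠ r in 𝓝[>] (0 : ℝ), p ≠ q → r + r ≤ dist p q := by
    intro p _ q _
    by_cases hpq : p = q
    · simp [hpq]
    filter_upwards [nhdsWithin_le_nhds (Iio_mem_nhds (half_pos (dist_pos.2 hpq)))] with r hr _
    linarith [mem_Iio.1 hr]
  obtain ⟨r, ⟨hr, hrP⟩, hrsep⟩ := (((eventually_mem_nhdsWithin (s := Ioi (0 : ℝ))).and
    ((eventually_all_finite hS).2 hP)).and ((eventually_all_finite hS).2 fun p hp =>
      (eventually_all_finite hS).2 (hsep p hp))).exists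
  exact ⟨r, hr, hrP, fun p hp q hq hpq => ball_disjoint_ball (hrsep p hp q hq hpq)⟩

namespace BrouwerDegreeTheory

variable {E : Type*} [NormedAddCommGroup E] [NormedSpace ℝ E] [FiniteDimensional ℝ E]
  (𝒟 : BrouwerDegreeTheory E) {D : Set E}

theorem deg_empty (f : E → E) (y : E) : 𝒟.deg f ∅ y = 0 := by
  have h := 𝒟.additivity f ∅ ∅ ∅ y isOpen_empty isBounded_empty (by simp)
    isOpen_empty isOpen_empty subset_rfl subset_rfl (disjoint_empty _) (by simp)
  omega

theorem deg_eq_of_norm_sub_lt (hD : IsOpen D) (hDb : IsBounded D) {f g : E → E} {y : E}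
    (hf : ContinuousOn f (closure D)) (hg : ContinuousOn g (closure D))
    (hfg : ∀ z ∈ frontier D, ‖f z - g z‖ < ‖g z - y‖) : 𝒟.deg f D y = 𝒟.deg g D y := by
  have hcont : ContinuousOn (fun q : ℝ × E => (1 - q.1) • f q.2 + q.1 • g q.2)
      (Icc 0 1 ×ˢ closure D) :=
    ((continuousOn_const.sub continuousOn_fst).smul (hf.comp continuousOn_snd fun _ h => h.2)).add
      (continuousOn_fst.smul (hg.comp continuousOn_snd fun _ h => h.2))
  have hne : ∀ t ∈ Icc (0 : ℝ) 1, ∀ z ∈ frontier D, (1 - t) • f z + t • g z ≠ y := by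
    intro t ht z hz heq
    have hdecomp : g z - y = -((1 - t) • (f z - g z)) := by
      rw [← heq]; module
    have : ‖g z - y‖ ≤ ‖f z - g z‖ := by
      rw [hdecomp, norm_neg, norm_smul, Real.norm_of_nonneg (by linarith [ht.2])]
      exact mul_le_of_le_one_left (norm_nonneg _) (by linarith [ht.1])
    exact (hfg z hz).not_ge this
  simpa using 𝒟.homotopy_invariance _ D (fun _ => y) hD hDb hcont continuousOn_const hne

theorem deg_target_eq_of_norm_sub_lt (hD : IsOpen D) (hDb : IsBounded D) {f : E → E}
    {y y' : E} (hf : ContinuousOn f (closure D))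
    (hy : ∀ z ∈ frontier D, ‖y' - y‖ < ‖f z - y‖) : 𝒟.deg f D y = 𝒟.deg f D y' := by
  have hne : ∀ t ∈ Icc (0 : ℝ) 1, ∀ z ∈ frontier D, f z ≠ y + t • (y' - y) := by
    intro t ht z hz heq
    have : ‖f z - y‖ ≤ ‖y' - y‖ := by
      rw [heq, add_sub_cancel_left, norm_smul, Real.norm_of_nonneg ht.1]
      exact mul_le_of_le_one_left (norm_nonneg _) ht.2
    exact (hy z hz).not_ge this
  simpa using 𝒟.homotopy_invariance (fun _ => f) D (fun t => y + t • (y' - y)) hD hDb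
    (hf.comp continuousOn_snd fun _ h => h.2) (by fun_prop) hne

theorem deg_sub_add_eq_one (hD : IsOpen D) (hDb : IsBounded D) {p : E} (hp : p ∈ D) (y : E) :
    𝒟.deg (fun z => z - p + y) D y = 1 := by
  have hne : ∀ t ∈ Icc (0 : ℝ) 1, ∀ z ∈ frontier D, z - t • p + t • y ≠ p - t • p + t • y := by
    intro t _ z hz heq
    rw [add_left_inj, sub_left_inj] at heq
    exact (hD.frontier_eq ▸ hz).2 (heq ▸ hp)
  have h := 𝒟.homotopy_invariance (fun t z => z - t • p + t • y) D (fun t => p - t • p + t • y)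
    hD hDb (by fun_prop) (by fun_prop) hne
  simp only [zero_smul, sub_zero, add_zero, one_smul, sub_self, zero_add] at h
  rw [← h]
  exact 𝒟.normalization D p hD hDb hp

theorem deg_eq_zero_of_notMem_image (hD : IsOpen D) (hDb : IsBounded D) {f : E → E} {y : E}
    (hf : ContinuousOn f (closure D)) (hy : y ∉ f '' closure D) : 𝒟.deg f D y = 0 := by
  rw [𝒟.additivity f D ∅ ∅ y hD hDb hf isOpen_empty isOpen_empty (empty_subset _)
    (empty_subset _) (disjoint_empty _) (by simpa using hy), deg_empty, add_zero]

theorem deg_eq_sum_of_pairwiseDisjoint {ι : Type*} (s : Finset ι) {U : ι → Set E}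
    (hU : ∀ i ∈ s, IsOpen (U i)) (hdisj : (s : Set ι).PairwiseDisjoint U)
    {f : E → E} {y : E} (hD : IsOpen D) (hDb : IsBounded D) (hf : ContinuousOn f (closure D))
    (hUD : ∀ i ∈ s, U i ⊆ D) (hy : y ∉ f '' (closure D \ ⋃ i ∈ s, U i)) :
    𝒟.deg f D y = ∑ i ∈ s, 𝒟.deg f (U i) y := by
  classical
  induction s using Finset.induction_on generalizing D with
  | empty => simpa using 𝒟.deg_eq_zero_of_notMem_image hD hDb hf (by simpa using hy)
  | insert a s ha ih =>
    set V := ⋃ i ∈ s, U i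
    have hUV : ⋃ i ∈ insert a s, U i = U a ∪ V := by simp [V]
    have hV : IsOpen V := isOpen_biUnion fun i hi => hU i (Finset.mem_insert_of_mem hi)
    have hVD : V ⊆ D := iUnion₂_subset fun i hi => hUD i (Finset.mem_insert_of_mem hi)
    have hdisjV : Disjoint (U a) V := by
      refine disjoint_iUnion₂_right.2 fun i hi => hdisj (by simp) (by simp [hi]) ?_
      rintro rfl; exact ha hi
    rw [Finset.sum_insert ha, 𝒟.additivity f D (U a) V y hD hDb hf (hU a (by simp)) hV
      (hUD a (by simp)) hVD hdisjV (hUV ▸ hy)]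
    congr 1
    refine ih (fun i hi => hU i (by simp [hi])) (hdisj.subset (by simp)) hV (hDb.subset hVD)
      (hf.mono (closure_mono hVD)) (fun i hi => subset_biUnion_of_mem (u := U) hi) ?_
    rintro ⟨z, ⟨hzV, hzV'⟩, rfl⟩
    have hzUa : z ∈ U a := by
      by_contra hzUa
      refine hy ⟨z, ⟨closure_mono hVD hzV, ?_⟩, rfl⟩
      rw [hUV]
      exact fun h => h.elim hzUa hzV'
    exact (hdisjV.closure_right (hU a (by simp))).notMem_of_mem_left hzUa hzV

end BrouwerDegreeTheory

theorem DifferentiableOn.exists_regular_value_mem {E : Type*} [NormedAddCommGroup E]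
    [NormedSpace ℝ E] [FiniteDimensional ℝ E] [NormedSpace ℂ E] [IsScalarTower ℝ ℂ E]
    {g : E → E} {D : Set E} (hg : DifferentiableOn ℂ g D) (hD : IsOpen D) {U : Set E}
    (hU : IsOpen U) (hUne : U.Nonempty) :
    ∃ c ∈ U, ∀ z ∈ D, g z = c → ∃ A : E ≃L[ℂ] E, HasFDerivAt g (A : E →L[ℂ] E) z := by
  have : FiniteDimensional ℂ E := .of_restrictScalars_finite ℝ ℂ E
  let _ : MeasurableSpace E := borel E
  have : BorelSpace E := ⟨rfl⟩
  set C := {z ∈ D | ¬ ∃ A : E ≃L[ℂ] E, HasFDerivAt g (A : E →L[ℂ] E) z}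
  have hderiv : ∀ z ∈ D, HasFDerivAt g (fderiv ℂ g z) z := fun z hz =>
    (hg.differentiableAt (hD.mem_nhds hz)).hasFDerivAt
  have hsard : Measure.addHaar (g '' C) = 0 := by
    refine addHaar_image_eq_zero_of_det_fderivWithin_eq_zero _
      (f' := fun z => (fderiv ℂ g z).restrictScalars ℝ)
      (fun z hz => ((hderiv z hz.1).restrictScalars ℝ).hasFDerivWithinAt) fun z hz => ?_
    by_contra hdet
    have hbij : Function.Bijective (fderiv ℂ g z) :=
      (Module.End.isUnit_iff (((fderiv ℂ g z).restrictScalars ℝ : E →L[ℝ] E) : E →ₗ[ℝ] E)).1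
        ((LinearMap.isUnit_iff_isUnit_det _).2 (Ne.isUnit hdet))
    exact hz.2 ⟨(LinearEquiv.ofBijective (fderiv ℂ g z : E →ₗ[ℂ] E) hbij).toContinuousLinearEquiv,
      hderiv z hz.1⟩
  obtain ⟨c, hcU, hc⟩ := not_subset.1 fun h =>
    (hU.measure_pos Measure.addHaar hUne).ne' (measure_mono_null h hsard)
  exact ⟨c, hcU, fun z hz hgz => by_contra fun hreg => hc ⟨z, ⟨hz, hreg⟩, hgz⟩⟩

namespace BrouwerDegreeTheory

variable {E : Type*} [NormedAddCommGroup E] [NormedSpace ℝ E] [FiniteDimensional ℝ E]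
  [NormedSpace ℂ E] [IsScalarTower ℝ ℂ E] (𝒟 : BrouwerDegreeTheory E) {D : Set E}

theorem deg_affine_eq_one (hD : IsOpen D) (hDb : IsBounded D) (A : E ≃L[ℂ] E) {p : E}
    (hp : p ∈ D) (y : E) : 𝒟.deg (fun z => A (z - p) + y) D y = 1 := by
  have : FiniteDimensional ℂ E := .of_restrictScalars_finite ℝ ℂ E
  set L : E →ₗ[ℂ] E := ((A : E →L[ℂ] E) : E →ₗ[ℂ] E)
  obtain ⟨γ, hγ⟩ := LinearMap.exists_path_forall_det_ne_zero (f := L)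
    (LinearEquiv.isUnit_det' A.toLinearEquiv).ne_zero
  have hne : ∀ t ∈ Icc (0 : ℝ) 1, ∀ z ∈ frontier D,
      A (z - p) + γ.extend t • ((z - p) - A (z - p)) + y ≠ y := by
    intro t ht z hz heq
    have hker : LinearMap.ker (L + γ.extend t • (LinearMap.id - L)) = ⊥ := by
      simpa [Path.extend_apply γ ht, LinearMap.det_eq_zero_iff_ker_ne_bot] using hγ ⟨t, ht⟩
    have hzp : z - p = 0 := LinearMap.ker_eq_bot.1 hker (by simpa [L] using heq)
    exact (hD.frontier_eq ▸ hz).2 (sub_eq_zero.1 hzp ▸ hp)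
  have h := 𝒟.homotopy_invariance
    (fun t z => A (z - p) + γ.extend t • ((z - p) - A (z - p)) + y) D (fun _ => y) hD hDb
    (by fun_prop) continuousOn_const hne
  simp only [Path.extend_zero, Path.extend_one, zero_smul, add_zero, one_smul,
    add_sub_cancel] at h
  rw [h]
  exact 𝒟.deg_sub_add_eq_one hD hDb hp y

theorem deg_ball_eq_one (A : E ≃L[ℂ] E) {g : E → E} {p : E} {r : ℝ} (hr : 0 < r)
    (hg : ContinuousOn g (closedBall p r))
    (hgA : ∀ z ∈ sphere p r, ‖g z - g p - A (z - p)‖ < ‖A (z - p)‖) :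
    𝒟.deg g (ball p r) (g p) = 1 := by
  rw [𝒟.deg_eq_of_norm_sub_lt isOpen_ball isBounded_ball (g := fun z => A (z - p) + g p)
    (by rwa [closure_ball p hr.ne']) (by fun_prop)
    (fun z hz => by simpa [sub_sub, add_comm] using hgA z (frontier_ball p hr.ne' ▸ hz))]
  exact 𝒟.deg_affine_eq_one isOpen_ball isBounded_ball A (mem_ball_self hr) _

theorem eventually_deg_ball_eq_one (A : E ≃L[ℂ] E) {g : E → E} {p : E}
    (hg : HasFDerivAt g (A : E →L[ℂ] E) p) {U : Set E} (hgU : ContinuousOn g U) (hU : U ∈ 𝓝 p) :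
    ∀ᶠ r in 𝓝[>] 0, 𝒟.deg g (ball p r) (g p) = 1 := by
  obtain ⟨δ, hδ, hδA⟩ :=
    Metric.eventually_nhds_iff_ball.1 (eventually_nhdsWithin_iff.1 hg.eventually_norm_sub_lt)
  filter_upwards [nhdsWithin_le_nhds (eventually_closedBall_subset hU), Ioo_mem_nhdsGT hδ]
    with r hrU hr
  refine 𝒟.deg_ball_eq_one A hr.1 (hgU.mono hrU) fun z hz =>
    hδA z ?_ (ne_of_mem_sphere hz hr.1.ne')
  rw [mem_ball, mem_sphere.1 hz]
  exact hr.2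

theorem deg_nonneg_of_differentiableOn (hD : IsOpen D) (hDb : IsBounded D) {g : E → E}
    (hgc : ContinuousOn g (closure D)) (hg : DifferentiableOn ℂ g D)
    (hfr : ∀ z ∈ frontier D, g z ≠ 0) : 0 ≤ 𝒟.deg g D 0 := by
  obtain ⟨ε, hε, hεg⟩ := (hDb.isCompact_closure.of_isClosed_subset isClosed_frontier
    frontier_subset_closure).exists_forall_le' (hgc.mono frontier_subset_closure).norm
    fun z hz => norm_pos_iff.2 (hfr z hz)
  obtain ⟨c, hc, hreg⟩ := hg.exists_regular_value_mem hD isOpen_ball (nonempty_ball.2 hε)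
  have hcε : ‖c‖ < ε := mem_ball_zero_iff.1 hc
  rw [𝒟.deg_target_eq_of_norm_sub_lt hD hDb hgc (y' := c) fun z hz => by
    simpa using hcε.trans_le (hεg z hz)]
  set S := {z ∈ closure D | g z = c}
  have hSD : S ⊆ D := fun z hz => by
    by_contra hzD
    exact (hz.2 ▸ hεg z (hD.frontier_eq ▸ ⟨hz.1, hzD⟩)).not_gt hcε
  have hSfin : S.Finite := by
    refine IsCompact.finite (hDb.isCompact_closure.of_isClosed_subset
      (hgc.preimage_isClosed_of_isClosed isClosed_closure isClosed_singleton) fun z hz => hz.1)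
      (isDiscrete_iff_nhdsNE.2 fun p hp => inf_principal_eq_bot.2 ?_)
    obtain ⟨A, hA⟩ := hreg p (hSD hp) hp.2
    filter_upwards [hA.eventually_ne ⟨_, A.antilipschitz⟩] with z hz hzS
    exact hz (hzS.2.trans hp.2.symm)
  have hloc : ∀ p ∈ S, ∀ᶠ r in 𝓝[>] 0, closedBall p r ⊆ D ∧ 𝒟.deg g (ball p r) c = 1 := by
    intro p hp
    obtain ⟨A, hA⟩ := hreg p (hSD hp) hp.2
    have hDp : D ∈ 𝓝 p := hD.mem_nhds (hSD hp)
    exact Eventually.and (nhdsWithin_le_nhds (eventually_closedBall_subset hDp))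
      (hp.2 ▸ 𝒟.eventually_deg_ball_eq_one A hA (hgc.mono subset_closure) hDp)
  obtain ⟨r, hr, hrloc, hdisj⟩ := hSfin.exists_pos_forall_pairwiseDisjoint_ball hloc
  have hmem : ∀ {p}, p ∈ hSfin.toFinset ↔ p ∈ S := hSfin.mem_toFinset
  rw [𝒟.deg_eq_sum_of_pairwiseDisjoint hSfin.toFinset (U := fun p => ball p r)
    (fun _ _ => isOpen_ball) (by rwa [hSfin.coe_toFinset])
    hD hDb hgc (fun p hp => ball_subset_closedBall.trans (hrloc p (hmem.1 hp)).1)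
    fun ⟨z, ⟨hz, hzU⟩, hgz⟩ => hzU (mem_biUnion (hmem.2 ⟨hz, hgz⟩) (mem_ball_self hr))]
  exact Finset.sum_nonneg fun p hp => (hrloc p (hmem.1 hp)).2 ▸ zero_le_one

end BrouwerDegreeTheory

theorem degree_nonneg_of_holomorphic_extension_general
    (N : ℕ)
    (D : Set (EuclideanSpace ℂ (Fin N)))
    (hDopen : IsOpen D) (hDbdd : IsBounded D)
    (Φ : EuclideanSpace ℂ (Fin N) → EuclideanSpace ℂ (Fin N))
    (hΦne : ∀ z ∈ frontier D, Φ z ≠ 0)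
    (hext : ExtendsHolomorphically Φ D)
    (𝒟 : BrouwerDegreeTheory (EuclideanSpace ℂ (Fin N))) :
    ∀ F : EuclideanSpace ℂ (Fin N) → EuclideanSpace ℂ (Fin N),
      ContinuousOn F (closure D) → (∀ z ∈ frontier D, F z = Φ z) →
      0 ≤ 𝒟.deg F D 0 := by
  intro F hF hFΦ
  obtain ⟨g, hgc, hg, hgΦ⟩ := hext
  rw [𝒟.deg_eq_of_norm_sub_lt hDopen hDbdd hF hgc fun z hz => by
    simpa [hFΦ z hz, hgΦ z hz] using hΦne z hz]
  exact 𝒟.deg_nonneg_of_differentiableOn hDopen hDbdd hgc hg fun z hz => hgΦ z hz ▸ hΦne z hz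

/-- If `D ⊂ ℂ^N` is a bounded domain and `Φ : bD → ℂ^N \ {0}` is a continuous map which
extends holomorphically through `D`, then `deg Φ ≥ 0`. -/
theorem degree_nonneg_of_holomorphic_extension
    (N : ℕ)
    (D : Set (EuclideanSpace ℂ (Fin N)))
    (hDopen : IsOpen D) (hDbdd : IsBounded D) (hDconn : IsConnected D)
    (Φ : EuclideanSpace ℂ (Fin N) → EuclideanSpace ℂ (Fin N))
    (hΦcont : ContinuousOn Φ (frontier D))
    (hΦne : ∀ z ∈ frontier D, Φ z ≠ 0)
    (hext : ExtendsHolomorphically Φ D)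
    (𝒟 : BrouwerDegreeTheory (EuclideanSpace ℂ (Fin N))) :
    ∀ F : EuclideanSpace ℂ (Fin N) → EuclideanSpace ℂ (Fin N),
      ContinuousOn F (closure D) → (∀ z ∈ frontier D, F z = Φ z) →
      0 ≤ 𝒟.deg F D 0 :=
  degree_nonneg_of_holomorphic_extension_general N D hDopen hDbdd Φ hΦne hext 𝒟

end
end

section
/- Let N ≥ 2, let A = (A₁,…,A_N) : ℂ^N → ℂ^N be an ℝ-linear map, and suppose A₁(ζ,0,…,0) = αζ + β·conj(ζ) for all ζ ∈ ℂ, where α, β ∈ ℂ and β ≠ 0. Then there exists T > 0 such that for every t ∈ [0,1] the ℝ-linear map z ↦ (β·conj(z₁), Tz₂ + tA₂(z), …, Tz_N + tA_N(z)) from ℂ^N to ℂ^N is invertible and reverses orientation, i.e., has negative determinant when regarded as an ℝ-linear map of ℝ^{2N}. -/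
/-!
Split `ℂ^N = ℂ × ℂ^{N-1}` along the first coordinate. In these coordinates the map is block
lower triangular: the first diagonal block `ζ ↦ β·conj ζ` has determinant `-|β|²`, the second is
`T·id + t·B` with `B` the compression of `A` to `ℂ^{N-1}`. Once `T > ‖B‖`, the map `T·id + t·B`
is injective for every `t ∈ [0,1]`, so its determinant, positive at `t = 0`, stays positive by
continuity.
-/

open LinearMap Complex Set

theorem LinearMap.det_eq_det_mul_det_of_fst_comp {R M M' : Type*} [CommRing R]
    [AddCommGroup M] [Module R M] [AddCommGroup M'] [Module R M']
    [Module.Free R M] [Module.Finite R M] [Module.Free R M'] [Module.Finite R M']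
    (f : Module.End R (M × M')) (B : Module.End R M) (hf : fst R M M' ∘ₗ f = B ∘ₗ fst R M M') :
    f.det = B.det * (snd R M M' ∘ₗ f ∘ₗ inr R M M').det := by
  classical
  let b := Module.Free.chooseBasis R M
  let b' := Module.Free.chooseBasis R M'
  have hfst (x : M × M') : (f x).1 = B x.1 := LinearMap.congr_fun hf x
  have hblocks : toMatrix (b.prod b') (b.prod b') f =
      Matrix.fromBlocks (toMatrix b b B) 0 (toMatrix b b' (snd R M M' ∘ₗ f ∘ₗ inl R M M'))
        (toMatrix b' b' (snd R M M' ∘ₗ f ∘ₗ inr R M M')) := by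
    ext (i | i) (j | j) <;> simp [toMatrix_apply, hfst]
  rw [← det_toMatrix (b.prod b'), hblocks, Matrix.det_fromBlocks_zero₁₂, det_toMatrix,
    det_toMatrix]

theorem Complex.det_mulLeft_comp_conjAe (β : ℂ) :
    (mulLeft ℝ β ∘ₗ conjAe.toLinearMap).det = -normSq β := by
  rw [← AlgEquiv.toLinearEquiv_toLinearMap, det_comp, det_conjAe, ← Algebra.norm_complex_apply,
    Algebra.norm_apply, mul_neg_one]
  rfl

theorem ContinuousLinearMap.injective_smul_one_add_of_norm_lt {E : Type*} [NormedAddCommGroup E]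
    [NormedSpace ℝ E] {B : E →L[ℝ] E} {T : ℝ} (hB : ‖B‖ < T) :
    Function.Injective (T • (1 : E →L[ℝ] E) + B) := by
  rw [injective_iff_map_eq_zero]
  intro x hx
  have hBx : B x = -(T • x) := eq_neg_of_add_eq_zero_right hx
  have hTx : T * ‖x‖ ≤ ‖B‖ * ‖x‖ :=
    calc T * ‖x‖ = ‖B x‖ := by
          rw [hBx, norm_neg, norm_smul, Real.norm_of_nonneg ((norm_nonneg B).trans hB.le)]
      _ ≤ ‖B‖ * ‖x‖ := B.le_opNorm x
  exact norm_eq_zero.1 (by nlinarith [norm_nonneg x])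

theorem LinearMap.exists_pos_forall_det_smul_id_add_smul_pos {E : Type*} [NormedAddCommGroup E]
    [NormedSpace ℝ E] [FiniteDimensional ℝ E] (B : E →ₗ[ℝ] E) :
    ∃ T : ℝ, 0 < T ∧ ∀ t ∈ Icc (0 : ℝ) 1, 0 < (T • LinearMap.id + t • B).det := by
  set B' := B.toContinuousLinearMap
  set T := ‖B'‖ + 1
  let g : ℝ → ℝ := fun t => (T • (1 : E →L[ℝ] E) + t • B').det
  have hg_cont : Continuous g := ContinuousLinearMap.continuous_det.comp (by fun_prop)
  have hg_ne : ∀ t ∈ Icc (0 : ℝ) 1, g t ≠ 0 := by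
    intro t ht
    have hnorm : ‖t • B'‖ < T := by
      rw [norm_smul, Real.norm_of_nonneg ht.1]
      nlinarith [norm_nonneg B', ht.2]
    exact fun h => det_eq_zero_iff_ker_ne_bot.1 h
      (ker_eq_bot.2 (ContinuousLinearMap.injective_smul_one_add_of_norm_lt hnorm))
  have hg_zero : 0 < g 0 := by
    change 0 < LinearMap.det (T • LinearMap.id + (0 : ℝ) • B)
    rw [zero_smul, add_zero, det_smul, det_id, mul_one]
    positivity
  refine ⟨T, by positivity, fun t ht => ?_⟩
  change 0 < g t
  by_contra! hgt
  obtain ⟨s, hs, hgs⟩ := isPreconnected_Icc.intermediate_value ht ⟨le_rfl, zero_le_one⟩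
    hg_cont.continuousOn ⟨hgt, hg_zero.le⟩
  exact hg_ne s hs hgs

def EuclideanSpace.linearEquivSplitAt (R : Type*) {𝕜 ι : Type*} [Semiring R] [AddCommGroup 𝕜]
    [Module R 𝕜] [DecidableEq ι] (i : ι) :
    EuclideanSpace 𝕜 ι ≃ₗ[R] 𝕜 × ({j // j ≠ i} → 𝕜) :=
  (WithLp.linearEquiv 2 R (ι → 𝕜)).trans
    { Equiv.funSplitAt i 𝕜 with map_add' := fun _ _ => rfl, map_smul' := fun _ _ => rfl }

/-- **Key step of the proof of Proposition 5.3.** Let `A = (A₁,…,A_N) : ℂ^N → ℂ^N`, `N ≥ 2`, be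
an `ℝ`-linear map with `A₁(ζ,0,…,0) = αζ + β·conj ζ` for all `ζ ∈ ℂ`, where `β ≠ 0`. Then
there is `T > 0` such that for each `t ∈ [0,1]` the `ℝ`-linear map
`z ↦ (β·conj z₁, Tz₂ + tA₂(z), …, Tz_N + tA_N(z))` is invertible and reverses orientation,
i.e. has negative determinant as an `ℝ`-linear map of `ℝ^{2N}`. -/
theorem exists_orientation_reversing_homotopy
    (N : ℕ) (hN : 2 ≤ N)
    (A : EuclideanSpace ℂ (Fin N) →ₗ[ℝ] EuclideanSpace ℂ (Fin N))
    (β : ℂ) (hβ : β ≠ 0) :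
    ∃ T : ℝ, 0 < T ∧ ∀ t ∈ Set.Icc (0 : ℝ) 1,
      ∃ M : EuclideanSpace ℂ (Fin N) →ₗ[ℝ] EuclideanSpace ℂ (Fin N),
        (∀ (z : EuclideanSpace ℂ (Fin N)) (i : Fin N),
          M z i = if i = (⟨0, by omega⟩ : Fin N)
            then β * starRingEnd ℂ (z (⟨0, by omega⟩ : Fin N))
            else (T : ℂ) * z i + (t : ℂ) * A z i) ∧
        Function.Bijective ⇑M ∧ LinearMap.det M < 0 := by
  set i₀ : Fin N := ⟨0, by omega⟩
  let e := EuclideanSpace.linearEquivSplitAt ℝ (𝕜 := ℂ) i₀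
  let B := snd ℝ _ _ ∘ₗ e.toLinearMap ∘ₗ A ∘ₗ e.symm.toLinearMap ∘ₗ inr ℝ _ _
  obtain ⟨T, hT, hdet⟩ := exists_pos_forall_det_smul_id_add_smul_pos B
  refine ⟨T, hT, fun t ht => ?_⟩
  let M : EuclideanSpace ℂ (Fin N) →ₗ[ℝ] EuclideanSpace ℂ (Fin N) :=
    { toFun z := WithLp.toLp 2 fun i =>
        if i = i₀ then β * starRingEnd ℂ (z i₀) else (T : ℂ) * z i + (t : ℂ) * A z i
      map_add' x y := by ext i; by_cases h : i = i₀ <;> simp [h] <;> ring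
      map_smul' c x := by ext i; by_cases h : i = i₀ <;> simp [h, Complex.real_smul] <;> ring }
  have hfst : fst ℝ _ _ ∘ₗ (e.toLinearMap ∘ₗ M ∘ₗ e.symm.toLinearMap)
      = (mulLeft ℝ β ∘ₗ conjAe.toLinearMap) ∘ₗ fst ℝ _ _ := by
    ext <;> simp [M, e, EuclideanSpace.linearEquivSplitAt]
  have hsnd : snd ℝ _ _ ∘ₗ (e.toLinearMap ∘ₗ M ∘ₗ e.symm.toLinearMap) ∘ₗ inr ℝ _ _
      = T • LinearMap.id + t • B := by
    ext j z k
    simp [M, e, B, EuclideanSpace.linearEquivSplitAt, k.2]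
  have hM : M.det < 0 := by
    rw [← det_conj M e, det_eq_det_mul_det_of_fst_comp _ _ hfst, det_mulLeft_comp_conjAe, hsnd]
    exact mul_neg_of_neg_of_pos (neg_neg_of_pos (normSq_pos.2 hβ)) (hdet t ht)
  exact ⟨M, fun z i => rfl, (equivOfDetNeZero M hM.ne).bijective, hM⟩
end

section
/- Let s be a nonconstant complex polynomial in one variable, let a ∈ ℂ and r > 0. Then there exists b ∈ ℂ such that the function ζ ↦ conj(s(ζ − a)) − b has no zeros on the circle {ζ ∈ ℂ : |ζ − a| = r} and the change of argument of ζ ↦ conj(s(ζ − a)) − b along this circle (traversed counterclockwise), equivalently 2π times the winding number of this loop around 0, is negative. -/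
/-!
Pick `w` with `|w| < r` such that `s` does not take the value `c = s(w)` on the circle
`|w| = r`: since `s` is an open map, `s` maps the open disc onto a set of positive measure,
while the image of the circle is Lebesgue-null. Take `b = conj c`.

Over its roots, `s - c = lc · ∏ (X - z)`, and each factor `r e^{it} - z` has the explicit
continuous argument `t + arg (1 - z e^{-it} / r)` if `|z| < r`, and
`arg (-z) + arg (1 - r e^{it} / z)` if `|z| > r`; the `arg` terms stay in the slit plane, so
they are continuous and return to their initial value. Hence the argument of `s(r e^{it}) - c`
increases by `2π` times the number of roots in the disc, which is positive because `w` is one,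
and conjugation reverses the sign.
Finally two continuous arguments of the same loop differ by a continuous `2πℤ`-valued function,
hence by a constant.
-/

open Real

noncomputable section

open Complex ComplexConjugate Metric MeasureTheory Polynomial

theorem Polynomial.exists_mem_ball_eval_notMem_image_sphere (q : Polynomial ℂ)
    (hq : q.natDegree ≠ 0) (c : ℂ) {r : ℝ} (hr : 0 < r) :
    ∃ w ∈ ball c r, q.eval w ∉ (q.eval ·) '' sphere c r := by
  have hball : 0 < volume ((q.eval ·) '' ball c r) :=
    ((q.isOpenQuotientMap_eval hq).isOpenMap _ isOpen_ball).measure_pos _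
      ((nonempty_ball.2 hr).image _)
  have hsphere : volume ((q.eval ·) '' sphere c r) = 0 :=
    addHaar_image_eq_zero_of_differentiableOn_of_addHaar_eq_zero _
      (q.differentiable.restrictScalars ℝ).differentiableOn (Measure.addHaar_sphere _ _ _)
  by_contra! h
  have : (q.eval ·) '' ball c r ⊆ (q.eval ·) '' sphere c r := by
    rintro _ ⟨w, hw, rfl⟩
    exact h w hw
  exact hball.ne' (measure_mono_null this hsphere)

theorem sub_eq_sub_of_exp_mul_I_eq {α : Type*} [TopologicalSpace α] {S : Set α}
    (hS : IsPreconnected S) {θ₁ θ₂ : α → ℝ} (h₁ : ContinuousOn θ₁ S) (h₂ : ContinuousOn θ₂ S)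
    (h : ∀ x ∈ S, exp (I * θ₁ x) = exp (I * θ₂ x)) {x y : α} (hx : x ∈ S) (hy : y ∈ S) :
    θ₁ y - θ₁ x = θ₂ y - θ₂ x := by
  have hmaps : Set.MapsTo (θ₁ - θ₂) S (AddSubgroup.zmultiples (2 * π)) := by
    intro t ht
    obtain ⟨n, hn⟩ := exp_eq_exp_iff_exists_int.1 (h t ht)
    refine ⟨n, ?_⟩
    have : ((θ₁ t - θ₂ t : ℝ) : ℂ) = ((n • (2 * π) : ℝ) : ℂ) := by
      push_cast
      linear_combination (-I) * hn + ((θ₁ t : ℂ) - θ₂ t - n * (2 * π)) * I_sq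
    exact_mod_cast this.symm
  have := hS.constant_of_mapsTo (isDiscrete_iff_discreteTopology.2
    (inferInstanceAs (DiscreteTopology (AddSubgroup.zmultiples (2 * π))))) (h₁.sub h₂) hmaps hx hy
  simp only [Pi.sub_apply] at this
  linarith

def IsArgLiftOn {α : Type*} (f : α → ℂ) (θ : α → ℝ) (S : Set α) : Prop :=
  ∀ t ∈ S, f t = ‖f t‖ * exp (I * θ t)

namespace IsArgLiftOn

variable {α : Type*} {f g : α → ℂ} {θ φ : α → ℝ} {S : Set α}

theorem sub_eq_sub [TopologicalSpace α] (hS : IsPreconnected S) (hf : ∀ t ∈ S, f t ≠ 0)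
    (hθ : IsArgLiftOn f θ S) (hφ : IsArgLiftOn f φ S) (hθc : ContinuousOn θ S)
    (hφc : ContinuousOn φ S) {x y : α} (hx : x ∈ S) (hy : y ∈ S) :
    θ y - θ x = φ y - φ x :=
  sub_eq_sub_of_exp_mul_I_eq hS hθc hφc (fun t ht => mul_left_cancel₀
    (ofReal_ne_zero.2 (norm_ne_zero_iff.2 (hf t ht))) ((hθ t ht).symm.trans (hφ t ht))) hx hy

theorem mul (hθ : IsArgLiftOn f θ S) (hφ : IsArgLiftOn g φ S) :
    IsArgLiftOn (fun t => f t * g t) (fun t => θ t + φ t) S := fun t ht => by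
  simp only [norm_mul, ofReal_mul, ofReal_add, mul_add, Complex.exp_add]
  conv_lhs => rw [hθ t ht, hφ t ht]
  ring

theorem _root_.IsArgLiftOn.conj (hθ : IsArgLiftOn f θ S) :
    IsArgLiftOn (fun t => conj (f t)) (fun t => -θ t) S := fun t ht => by
  simp only [norm_conj]
  conv_lhs => rw [hθ t ht]
  rw [map_mul, conj_ofReal, ← exp_conj, map_mul, conj_I, conj_ofReal, ofReal_neg, neg_mul,
    mul_neg]

end IsArgLiftOn

theorem isArgLiftOn_arg {α : Type*} (f : α → ℂ) (S : Set α) :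
    IsArgLiftOn f (fun t => arg (f t)) S := fun t _ => by
  rw [mul_comm I, norm_mul_exp_arg_mul_I]

theorem continuous_arg_one_sub {α : Type*} [TopologicalSpace α] {u : α → ℂ} (hu : Continuous u)
    (hu1 : ∀ t, ‖u t‖ < 1) : Continuous fun t => arg (1 - u t) := by
  refine continuous_iff_continuousAt.2 fun t => (continuousAt_arg ?_).comp (by fun_prop)
  simpa [sub_eq_add_neg] using mem_slitPlane_of_norm_lt_one ((norm_neg (u t)).trans_lt (hu1 t))

theorem exists_isArgLiftOn_mul_one_sub {g u : ℝ → ℂ} {φ : ℝ → ℝ} (hg : IsArgLiftOn g φ .univ)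
    (hφ : Continuous φ) (hu : Continuous u) (hu1 : ∀ t, ‖u t‖ < 1) (hu2π : u (2 * π) = u 0) :
    ∃ θ : ℝ → ℝ, Continuous θ ∧ IsArgLiftOn (fun t => g t * (1 - u t)) θ .univ ∧
      θ (2 * π) - θ 0 = φ (2 * π) - φ 0 :=
  ⟨fun t => φ t + arg (1 - u t), hφ.add (continuous_arg_one_sub hu hu1),
    hg.mul (isArgLiftOn_arg _ _), by simp only [hu2π]; ring⟩

theorem isArgLiftOn_ofReal_mul_exp_I_mul {r : ℝ} (hr : 0 ≤ r) (S : Set ℝ) :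
    IsArgLiftOn (fun t : ℝ => r * exp (I * t)) (fun t => t) S := fun t _ => by
  simp [norm_exp, abs_of_nonneg hr]

theorem exists_isArgLiftOn_circle_sub {r : ℝ} (hr : 0 < r) {z : ℂ} (hz : ‖z‖ ≠ r) :
    ∃ θ : ℝ → ℝ, Continuous θ ∧ IsArgLiftOn (fun t : ℝ => r * exp (I * t) - z) θ .univ ∧
      θ (2 * π) - θ 0 = if ‖z‖ < r then 2 * π else 0 := by
  have hr0 : (r : ℂ) ≠ 0 := ofReal_ne_zero.2 hr.ne'
  rcases hz.lt_or_gt with hlt | hgt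
  · have hfactor : (fun t : ℝ => r * exp (I * t) - z) =
        fun t : ℝ => r * exp (I * t) * (1 - z * exp (-(I * t)) / r) := by
      ext t
      field_simp
      rw [Complex.exp_neg]
      field_simp
    obtain ⟨θ, hθc, hθ, hθ2π⟩ :=
      exists_isArgLiftOn_mul_one_sub (u := fun t : ℝ => z * exp (-(I * t)) / r)
      (isArgLiftOn_ofReal_mul_exp_I_mul hr.le _) continuous_id (by fun_prop)
      (fun t => by simpa [norm_exp, abs_of_pos hr, div_lt_one hr] using hlt)
      (by simp [mul_comm I, Complex.exp_neg])
    exact ⟨θ, hθc, hfactor ▸ hθ, by simp [hθ2π, hlt]⟩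
  · have hz0 : z ≠ 0 := norm_pos_iff.1 (hr.trans hgt)
    have hfactor : (fun t : ℝ => r * exp (I * t) - z) =
        fun t : ℝ => -z * (1 - r * exp (I * t) / z) := by
      ext t
      field_simp
      ring
    obtain ⟨θ, hθc, hθ, hθ2π⟩ :=
      exists_isArgLiftOn_mul_one_sub (u := fun t : ℝ => r * exp (I * t) / z)
      (isArgLiftOn_arg (fun _ => -z) _) continuous_const (by fun_prop)
      (fun t => by simpa [norm_exp, abs_of_pos hr, div_lt_one (hr.trans hgt)] using hgt)
      (by simp [mul_comm I])
    exact ⟨θ, hθc, hfactor ▸ hθ, by simp [hθ2π, hgt.not_gt]⟩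

theorem exists_isArgLiftOn_prod_circle_sub {r : ℝ} (hr : 0 < r) (m : Multiset ℂ)
    (hm : ∀ z ∈ m, ‖z‖ ≠ r) :
    ∃ θ : ℝ → ℝ, Continuous θ ∧
      IsArgLiftOn (fun t : ℝ => (m.map (r * exp (I * t) - ·)).prod) θ .univ ∧
      θ (2 * π) - θ 0 = 2 * π * (m.filter (‖·‖ < r)).card := by
  induction m using Multiset.induction_on with
  | empty => exact ⟨fun _ => 0, continuous_const, fun t _ => by simp, by simp⟩
  | cons z m ih =>
    obtain ⟨θz, hθzc, hθz, hθz2π⟩ := exists_isArgLiftOn_circle_sub hr (hm z (m.mem_cons_self z))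
    obtain ⟨θm, hθmc, hθm, hθm2π⟩ := ih fun w hw => hm w (Multiset.mem_cons_of_mem hw)
    refine ⟨fun t => θz t + θm t, hθzc.add hθmc,
      by simpa only [Multiset.map_cons, Multiset.prod_cons] using hθz.mul hθm, ?_⟩
    rw [Multiset.filter_cons]
    split_ifs at hθz2π with hz <;> simp [hz] <;> linarith

theorem Polynomial.exists_isArgLiftOn_eval_circle (P : ℂ[X]) {r : ℝ} (hr : 0 < r)
    (hP : ∀ z ∈ P.roots, ‖z‖ ≠ r) :
    ∃ θ : ℝ → ℝ, Continuous θ ∧ IsArgLiftOn (fun t : ℝ => P.eval (r * exp (I * t))) θ .univ ∧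
      θ (2 * π) - θ 0 = 2 * π * (P.roots.filter (‖·‖ < r)).card := by
  obtain ⟨θ, hθc, hθ, hθ2π⟩ := exists_isArgLiftOn_prod_circle_sub hr P.roots hP
  refine ⟨fun t => arg P.leadingCoeff + θ t, continuous_const.add hθc, ?_, by simp [hθ2π]⟩
  simpa only [(IsAlgClosed.splits P).eval_eq_prod_roots] using
    (isArgLiftOn_arg (fun _ => P.leadingCoeff) _).mul hθ

/-- **Observation in the proof of Proposition 5.4.** If `s` is a nonconstant complex
polynomial, `a ∈ ℂ` and `r > 0`, then there is `b ∈ ℂ` such that `ζ ↦ conj (s(ζ − a)) − b`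
has no zeros on the circle `{ζ : |ζ − a| = r}` and the change of argument of this function
along the circle (traversed counterclockwise) is negative: for every continuous argument
lift `θ` on `[0, 2π]` of the loop `t ↦ conj (s(a + r·exp(i t) − a)) − b`, one has
`θ(2π) − θ(0) < 0` (equivalently, `2π` times the winding number around `0` is negative). -/
theorem conj_polynomial_negative_winding
    (s : Polynomial ℂ) (hs : 0 < s.natDegree) (a : ℂ) (r : ℝ) (hr : 0 < r) :
    ∃ b : ℂ,
      (∀ ζ : ℂ, ‖ζ - a‖ = r →
        starRingEnd ℂ (Polynomial.eval (ζ - a) s) - b ≠ 0) ∧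
      ∀ θ : ℝ → ℝ, ContinuousOn θ (Set.Icc 0 (2 * π)) →
        (∀ t ∈ Set.Icc 0 (2 * π),
          starRingEnd ℂ (Polynomial.eval ((r : ℂ) * Complex.exp (Complex.I * t)) s) - b =
            ((‖starRingEnd ℂ
              (Polynomial.eval ((r : ℂ) * Complex.exp (Complex.I * t)) s) - b‖ : ℝ) : ℂ) *
              Complex.exp (Complex.I * θ t)) →
        θ (2 * π) - θ 0 < 0 := by
  obtain ⟨w, hw, hw_sphere⟩ := s.exists_mem_ball_eval_notMem_image_sphere hs.ne' 0 hr
  have hne_sphere : ∀ ζ : ℂ, ‖ζ‖ = r → s.eval ζ - s.eval w ≠ 0 := fun ζ hζ h =>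
    hw_sphere ⟨ζ, by simpa using hζ, sub_eq_zero.1 h⟩
  refine ⟨conj (s.eval w), fun ζ hζ => ?_, fun θ hθc hθ => ?_⟩
  · simpa [← map_sub] using hne_sphere (ζ - a) hζ
  set P := s - C (s.eval w)
  have hroots : ∀ z, z ∈ P.roots ↔ s.eval z = s.eval w :=
    fun z => mem_roots_sub_C (natDegree_pos_iff_degree_pos.1 hs)
  have hP : ∀ z ∈ P.roots, ‖z‖ ≠ r := fun z hz hzr =>
    hne_sphere z hzr (sub_eq_zero.2 ((hroots z).1 hz))
  have hw_root : w ∈ P.roots.filter (‖·‖ < r) :=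
    Multiset.mem_filter.2 ⟨(hroots w).2 rfl, by simpa using hw⟩
  obtain ⟨θ₀, hθ₀c, hθ₀, hθ₀2π⟩ := P.exists_isArgLiftOn_eval_circle hr hP
  have hconj₀ : IsArgLiftOn (fun t : ℝ => conj (s.eval (r * exp (I * t))) - conj (s.eval w))
      (fun t => -θ₀ t) (Set.Icc 0 (2 * π)) := fun t _ => by
    simpa [P] using hθ₀.conj t trivial
  have hloop_ne : ∀ t ∈ Set.Icc 0 (2 * π),
      conj (s.eval (r * exp (I * t))) - conj (s.eval w) ≠ 0 := fun t _ => by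
    simpa [← map_sub] using hne_sphere _ (by simp [norm_exp, abs_of_pos hr])
  have hchange := IsArgLiftOn.sub_eq_sub isPreconnected_Icc hloop_ne hθ hconj₀ hθc
    hθ₀c.neg.continuousOn (Set.left_mem_Icc.2 two_pi_pos.le) (Set.right_mem_Icc.2 two_pi_pos.le)
  have hcard : (0 : ℝ) < (P.roots.filter (‖·‖ < r)).card := by
    exact_mod_cast Multiset.card_pos_iff_exists_mem.2 ⟨w, hw_root⟩
  nlinarith [pi_pos]

end
end
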